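/- arXiv:2505.01353 — 2 statements merged into one kernel-verified Lean document; each statement's English description precedes it below -/
import Mathlib

section
/- Consider the parametric NLP min_{z∈ℝⁿ} f(z;θ) s.t. g(z;θ)=0, h(z;θ)≤0 and suppose (z*,λ*,μ*) is a KKT point at θ̄ satisfying LICQ, SOSC and strict complementarity. Define the parametric QP with exact Hessian: minimize over Δz the function ∇_z f(z*;θ)ᵀΔz + ½ΔzᵀQ*Δz subject to g(z*;θ)+∇_z g(z*;θ)ᵀΔz = 0 and h(z*;θ)+∇_z h(z*;θ)ᵀΔz ≤ 0, where Q* = ∇²_{zz}L(z*,λ*,μ*;θ̄). Let z^sol(θ), λ^sol(θ), μ^sol(θ) be the local NLP KKT solution maps around θ̄, and let Δz_QP(θ), λ_QP(θ), μ_QP(θ) be the local QP KKT solution maps around θ̄ with Δz_QP(θ̄)=0, λ_QP(θ̄)=λ*, μ_QP(θ̄)=μ*. Then z^sol(θ̄) = z* + Δz_QP(θ̄) and the derivatives at θ̄ coincide: D_θ z^sol(θ̄) = D_θ Δz_QP(θ̄), D_θ λ^sol(θ̄) = D_θ λ_QP(θ̄), and D_θ μ^sol(θ̄) = D_θ μ_QP(θ̄).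 -/
/-!
Near `θ̄` the NLP solution map and the QP solution map solve two systems with the same
linearization at `(z*, λ*, μ*, θ̄)`: the QP keeps the exact Hessian `Q*` together with the
`θ`-dependence of all first-order data. By strict complementarity the active set is locally
constant along both maps, so active inequalities behave as equalities and inactive multipliers
vanish identically. Differentiating both systems at `θ̄` and subtracting, the difference
`(dz, dλ, dμ)` of the sensitivities solves the homogeneous KKT system
`Q* dz + ∇gᵀ dλ + ∇h_Aᵀ dμ_A = 0`, `∇g dz = 0`, `∇h_A dz = 0`, `dμ_I = 0`. Testing the first
equation with `dz` gives `dzᵀ Q* dz = 0`, hence `dz = 0` by SOSC, and then `dλ = dμ = 0` by LICQ.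
-/

open Filter Topology

section KKTSystem

variable {E ι κ : Type*} [NormedAddCommGroup E] [NormedSpace ℝ E] [Fintype ι] [Fintype κ]

theorem Fintype.sum_eq_sum_subtype_of_eq_zero {M : Type*} [AddCommMonoid M] {p : κ → Prop}
    [DecidablePred p] {f : κ → M} (hf : ∀ i, ¬ p i → f i = 0) :
    ∑ i, f i = ∑ i : {i // p i}, f i := by
  rw [← Fintype.sum_subtype_add_sum_subtype p f,
    Fintype.sum_eq_zero (fun i : {i // ¬ p i} => f i) fun i => hf i i.2, add_zero]

theorem eq_zero_of_linearized_kkt {H : E →L[ℝ] E →L[ℝ] ℝ} {a : ι → E →L[ℝ] ℝ}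
    {b : κ → E →L[ℝ] ℝ} {active : κ → Prop}
    (hLICQ : LinearIndependent ℝ (Sum.elim a fun i : {i // active i} => b i))
    (hSOSC : ∀ d ≠ 0, (∀ j, a j d = 0) → (∀ i, active i → b i d = 0) → 0 < H d d)
    {dz : E} {dl : ι → ℝ} {dm : κ → ℝ}
    (hstat : H dz + ∑ j, dl j • a j + ∑ i, dm i • b i = 0)
    (ha : ∀ j, a j dz = 0) (hb : ∀ i, active i → b i dz = 0)
    (hinactive : ∀ i, ¬ active i → dm i = 0) :
    dz = 0 ∧ dl = 0 ∧ dm = 0 := by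
  classical
  have hb' : ∀ i, dm i * b i dz = 0 := fun i => by
    by_cases hi : active i
    · rw [hb i hi, mul_zero]
    · rw [hinactive i hi, zero_mul]
  have hdz : dz = 0 := by
    by_contra hne
    have hcurv := congrArg (fun φ : E →L[ℝ] ℝ => φ dz) hstat
    simp only [add_apply, sum_apply, smul_apply, smul_eq_mul, ha, mul_zero,
      Finset.sum_const_zero, hb', add_zero, zero_apply] at hcurv
    exact (hSOSC dz hne ha hb).ne' hcurv
  have hdual : ∑ s, Sum.elim dl (fun i : {i // active i} => dm i) s •
      Sum.elim a (fun i : {i // active i} => b i) s = 0 := by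
    rw [Fintype.sum_sum_type]
    simpa only [hdz, map_zero, zero_add, Sum.elim_inl, Sum.elim_inr,
      Fintype.sum_eq_sum_subtype_of_eq_zero (f := fun i => dm i • b i)
        fun i hi => by rw [hinactive i hi, zero_smul]] using hstat
  have hcoeff := Fintype.linearIndependent_iff.mp hLICQ _ hdual
  refine ⟨hdz, funext fun j => hcoeff (.inl j), funext fun i => ?_⟩
  by_cases hi : active i
  · exact hcoeff (.inr ⟨i, hi⟩)
  · exact hinactive i hi

end KKTSystem

theorem eventually_eq_zero_of_mul_eq_zero {X R : Type*} [TopologicalSpace X] [MulZeroClass R]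
    [NoZeroDivisors R] [TopologicalSpace R] [T1Space R] {u w : X → R} {x₀ : X}
    (hu : ContinuousAt u x₀) (hu₀ : u x₀ ≠ 0) (h : ∀ᶠ x in 𝓝 x₀, u x * w x = 0) :
    ∀ᶠ x in 𝓝 x₀, w x = 0 :=
  (h.and (hu.eventually_ne hu₀)).mono fun _ hx => (mul_eq_zero.mp hx.1).resolve_left hx.2

section Sensitivity

variable {E M P G κ : Type*} [NormedAddCommGroup E] [NormedSpace ℝ E]
  [NormedAddCommGroup M] [NormedSpace ℝ M] [NormedAddCommGroup P] [NormedSpace ℝ P]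
  [NormedAddCommGroup G] [NormedSpace ℝ G]

theorem differentiableAt_partial {F : E → P → G}
    (hF : Differentiable ℝ fun x : E × P => F x.1 x.2) (z : E) (θ : P) :
    DifferentiableAt ℝ (fun w => F w θ) z :=
  (hF _).comp z (differentiableAt_id.prodMk (differentiableAt_const θ))

theorem contDiff_fderiv_partial {F : E → P → G}
    (hF : ContDiff ℝ 2 fun x : E × P => F x.1 x.2) :
    ContDiff ℝ 1 fun x : E × P => fderiv ℝ (fun z => F z x.2) x.1 :=
  ContDiff.fderiv (f := fun (x : E × P) z => F z x.2)
    (hF.comp (contDiff_snd.prodMk (contDiff_snd.comp contDiff_fst))) contDiff_fst le_rfl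

theorem fderiv_fderiv_partial_apply {F : E → P → G}
    (hF : ContDiff ℝ 2 fun x : E × P => F x.1 x.2) (z₀ : E) (θ₀ : P) (d d' : E) :
    fderiv ℝ (fun z => fderiv ℝ (fun w => F w θ₀) z d) z₀ d'
      = fderiv ℝ (fun z => fderiv ℝ (fun w => F w θ₀) z) z₀ d' d := by
  rw [fderiv_clm_apply (differentiableAt_partial
    (F := fun z θ => fderiv ℝ (fun w => F w θ) z)
    ((contDiff_fderiv_partial hF).differentiable one_ne_zero) z₀ θ₀) (differentiableAt_const d)]
  simp

theorem fderiv_eq_zero_of_eventually_eq_zero {φ : P → G} {θ₀ : P}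
    (h : ∀ᶠ θ in 𝓝 θ₀, φ θ = 0) : fderiv ℝ φ θ₀ = 0 :=
  (Filter.EventuallyEq.fderiv_eq (f := fun _ => (0 : G)) h).trans (fderiv_const_apply 0)

theorem fderiv_apply_eq_partial_add_partial {Ψ : E × M × P → G} {z₀ : E} {m₀ : M} {θ₀ : P}
    (hΨ : DifferentiableAt ℝ Ψ (z₀, m₀, θ₀)) (a : E) (b : M) :
    fderiv ℝ Ψ (z₀, m₀, θ₀) (a, b, 0)
      = fderiv ℝ (fun z => Ψ (z, m₀, θ₀)) z₀ a + fderiv ℝ (fun m => Ψ (z₀, m, θ₀)) m₀ b := by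
  have hz : HasFDerivAt (fun z => Ψ (z, m₀, θ₀))
      ((fderiv ℝ Ψ (z₀, m₀, θ₀)).comp (.inl ℝ E (M × P))) z₀ :=
    hΨ.hasFDerivAt.comp z₀ (hasFDerivAt_prodMk_left z₀ (m₀, θ₀))
  have hm : HasFDerivAt (fun m => Ψ (z₀, m, θ₀))
      ((fderiv ℝ Ψ (z₀, m₀, θ₀)).comp ((0 : M →L[ℝ] E).prod (.inl ℝ M P))) m₀ :=
    hΨ.hasFDerivAt.comp m₀ ((hasFDerivAt_const z₀ m₀).prodMk (hasFDerivAt_prodMk_left m₀ θ₀))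
  rw [hz.fderiv, hm.fderiv]
  simp [← map_add]

/-- `(x, y)` solves `Ψ (·, ·, θ) = 0`, while `(z₀ + d, y₂)` solves its linearization in the first
argument, whose coefficient `A θ` agrees with `∂_z Ψ` at `θ₀`. -/
theorem linearized_sensitivity_sub_eq_zero {Ψ : E × M × P → G} {z₀ : E} {m₀ : M} {θ₀ : P}
    (hΨ : DifferentiableAt ℝ Ψ (z₀, m₀, θ₀)) {A : P → E →L[ℝ] G}
    (hA : DifferentiableAt ℝ A θ₀) (hA₀ : A θ₀ = fderiv ℝ (fun z => Ψ (z, m₀, θ₀)) z₀)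
    {x d : P → E} {y y₂ : P → M} (hx : DifferentiableAt ℝ x θ₀)
    (hy : DifferentiableAt ℝ y θ₀) (hd : DifferentiableAt ℝ d θ₀)
    (hy₂ : DifferentiableAt ℝ y₂ θ₀) (hx₀ : x θ₀ = z₀) (hy₀ : y θ₀ = m₀) (hd₀ : d θ₀ = 0)
    (hy₂₀ : y₂ θ₀ = m₀) (hN : ∀ᶠ θ in 𝓝 θ₀, Ψ (x θ, y θ, θ) = 0)
    (hQ : ∀ᶠ θ in 𝓝 θ₀, A θ (d θ) + Ψ (z₀, y₂ θ, θ) = 0) (v : P) :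
    fderiv ℝ (fun z => Ψ (z, m₀, θ₀)) z₀ (fderiv ℝ x θ₀ v - fderiv ℝ d θ₀ v)
      + fderiv ℝ (fun m => Ψ (z₀, m, θ₀)) m₀ (fderiv ℝ y θ₀ v - fderiv ℝ y₂ θ₀ v) = 0 := by
  have hNd : HasFDerivAt (fun θ => Ψ (x θ, y θ, θ)) ((fderiv ℝ Ψ (z₀, m₀, θ₀)).comp
      ((fderiv ℝ x θ₀).prod ((fderiv ℝ y θ₀).prod (.id ℝ P)))) θ₀ := by
    have hΨ' : HasFDerivAt Ψ (fderiv ℝ Ψ (z₀, m₀, θ₀)) (x θ₀, y θ₀, θ₀) := by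
      rw [hx₀, hy₀]; exact hΨ.hasFDerivAt
    exact hΨ'.comp θ₀ (hx.hasFDerivAt.prodMk (hy.hasFDerivAt.prodMk (hasFDerivAt_id θ₀)))
  have hQd : HasFDerivAt (fun θ => A θ (d θ) + Ψ (z₀, y₂ θ, θ))
      ((A θ₀).comp (fderiv ℝ d θ₀) + (fderiv ℝ A θ₀).flip (d θ₀) + (fderiv ℝ Ψ (z₀, m₀, θ₀)).comp
        ((0 : P →L[ℝ] E).prod ((fderiv ℝ y₂ θ₀).prod (.id ℝ P)))) θ₀ := by
    have hΨ' : HasFDerivAt Ψ (fderiv ℝ Ψ (z₀, m₀, θ₀)) (z₀, y₂ θ₀, θ₀) := by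
      rw [hy₂₀]; exact hΨ.hasFDerivAt
    exact (hA.hasFDerivAt.clm_apply hd.hasFDerivAt).add (hΨ'.comp θ₀
      ((hasFDerivAt_const z₀ θ₀).prodMk (hy₂.hasFDerivAt.prodMk (hasFDerivAt_id θ₀))))
  have hNv := congrArg (· v) (hNd.fderiv.symm.trans (fderiv_eq_zero_of_eventually_eq_zero hN))
  have hQv := congrArg (· v) (hQd.fderiv.symm.trans (fderiv_eq_zero_of_eventually_eq_zero hQ))
  simp only [hd₀, hA₀, map_zero, add_zero, ContinuousLinearMap.coe_comp, Function.comp_apply,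
    ContinuousLinearMap.prod_apply, ContinuousLinearMap.coe_id', id_eq, zero_apply,
    add_apply] at hNv hQv
  have hsplit : (fderiv ℝ x θ₀ v - fderiv ℝ d θ₀ v, fderiv ℝ y θ₀ v - fderiv ℝ y₂ θ₀ v, (0 : P))
      = (fderiv ℝ x θ₀ v, fderiv ℝ y θ₀ v, v) - (0, fderiv ℝ y₂ θ₀ v, v)
        - (fderiv ℝ d θ₀ v, 0, 0) := by
    simp
  rw [← fderiv_apply_eq_partial_add_partial hΨ, hsplit, map_sub, map_sub, hNv,
    fderiv_apply_eq_partial_add_partial hΨ, map_zero, add_zero]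
  linear_combination (norm := module) -hQv

theorem equality_constraint_sensitivity_sub_eq_zero {F : E → P → G}
    (hF : ContDiff ℝ 2 fun x : E × P => F x.1 x.2) {z₀ : E} {θ₀ : P} {x d : P → E}
    (hx : DifferentiableAt ℝ x θ₀) (hd : DifferentiableAt ℝ d θ₀) (hx₀ : x θ₀ = z₀)
    (hd₀ : d θ₀ = 0) (hN : ∀ᶠ θ in 𝓝 θ₀, F (x θ) θ = 0)
    (hQ : ∀ᶠ θ in 𝓝 θ₀, F z₀ θ + fderiv ℝ (fun z => F z θ) z₀ (d θ) = 0) (v : P) :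
    fderiv ℝ (fun z => F z θ₀) z₀ (fderiv ℝ x θ₀ v - fderiv ℝ d θ₀ v) = 0 := by
  have hΨ : Differentiable ℝ fun w : E × Unit × P => F w.1 w.2.2 :=
    (hF.differentiable two_ne_zero).comp (differentiable_fst.prodMk differentiable_snd.snd)
  have hA : DifferentiableAt ℝ (fun θ => fderiv ℝ (fun z => F z θ) z₀) θ₀ :=
    ((contDiff_fderiv_partial hF).differentiable one_ne_zero _).comp θ₀
      ((differentiableAt_const z₀).prodMk differentiableAt_id)
  simpa using linearized_sensitivity_sub_eq_zero (hΨ _) hA rfl hx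
    (differentiableAt_const ()) hd (differentiableAt_const ()) hx₀ rfl hd₀ rfl hN
    (hQ.mono fun θ hθ => by rwa [add_comm]) v

theorem fderiv_apply_eq_zero_of_mul_eq_zero {μ : P → κ → ℝ} {c : P → ℝ} {θ₀ : P} {i : κ}
    (hμ : DifferentiableAt ℝ μ θ₀) (hc : ContinuousAt c θ₀) (hc₀ : c θ₀ ≠ 0)
    (h : ∀ᶠ θ in 𝓝 θ₀, μ θ i * c θ = 0) (v : P) : fderiv ℝ μ θ₀ v i = 0 := by
  have hμi := eventually_eq_zero_of_mul_eq_zero hc hc₀ (h.mono fun _ hθ => by rwa [mul_comm])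
  simpa using congrArg (· v) ((fderiv_apply hμ i).symm.trans
    (fderiv_eq_zero_of_eventually_eq_zero hμi))

theorem inequality_constraint_sensitivity {F : E → P → ℝ}
    (hF : ContDiff ℝ 2 fun x : E × P => F x.1 x.2) {z₀ : E} {θ₀ : P} {μ₀ : ℝ} {i : κ}
    {x d : P → E} {μ μ₂ : P → κ → ℝ} (hx : DifferentiableAt ℝ x θ₀)
    (hd : DifferentiableAt ℝ d θ₀) (hμ : DifferentiableAt ℝ μ θ₀)
    (hμ₂ : DifferentiableAt ℝ μ₂ θ₀) (hx₀ : x θ₀ = z₀) (hd₀ : d θ₀ = 0) (hμ₀ : μ θ₀ i = μ₀)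
    (hμ₂₀ : μ₂ θ₀ i = μ₀) (hstrict : F z₀ θ₀ = 0 → 0 < μ₀)
    (hN : ∀ᶠ θ in 𝓝 θ₀, μ θ i * F (x θ) θ = 0)
    (hQ : ∀ᶠ θ in 𝓝 θ₀, μ₂ θ i * (F z₀ θ + fderiv ℝ (fun z => F z θ) z₀ (d θ)) = 0) (v : P) :
    (F z₀ θ₀ = 0 → fderiv ℝ (fun z => F z θ₀) z₀ (fderiv ℝ x θ₀ v - fderiv ℝ d θ₀ v) = 0) ∧
      (F z₀ θ₀ ≠ 0 → fderiv ℝ μ θ₀ v i - fderiv ℝ μ₂ θ₀ v i = 0) := by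
  constructor
  · intro hactive
    have hμ₀ne : μ₀ ≠ 0 := (hstrict hactive).ne'
    exact equality_constraint_sensitivity_sub_eq_zero hF hx hd hx₀ hd₀
      (eventually_eq_zero_of_mul_eq_zero (continuousAt_pi.mp hμ.continuousAt i)
        (by rwa [hμ₀]) hN)
      (eventually_eq_zero_of_mul_eq_zero (continuousAt_pi.mp hμ₂.continuousAt i)
        (by rwa [hμ₂₀]) hQ) v
  · intro hinactive
    have hcN : ContinuousAt (fun θ => F (x θ) θ) θ₀ :=
      hF.continuous.continuousAt.comp (f := fun θ => (x θ, θ))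
        (hx.continuousAt.prodMk continuousAt_id)
    have hcQ : ContinuousAt (fun θ => F z₀ θ + fderiv ℝ (fun z => F z θ) z₀ (d θ)) θ₀ :=
      (hF.continuous.comp (continuous_const.prodMk continuous_id)).continuousAt.add
        (((contDiff_fderiv_partial hF).continuous.comp
          (continuous_const.prodMk continuous_id)).continuousAt.clm_apply hd.continuousAt)
    rw [fderiv_apply_eq_zero_of_mul_eq_zero hμ hcN (by rwa [hx₀]) hN v,
      fderiv_apply_eq_zero_of_mul_eq_zero hμ₂ hcQ (by simpa [hd₀] using hinactive) hQ v,
      sub_zero]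

end Sensitivity

noncomputable section Lagrangian

variable {E P ι κ : Type*} [NormedAddCommGroup E] [NormedSpace ℝ E] [Fintype ι] [Fintype κ]
  {f : E → P → ℝ} {g : E → P → ι → ℝ} {h : E → P → κ → ℝ}

def lagrangian (f : E → P → ℝ) (g : E → P → ι → ℝ) (h : E → P → κ → ℝ) (lam : ι → ℝ)
    (mu : κ → ℝ) (z : E) (θ : P) : ℝ :=
  f z θ + ∑ j, lam j * g z θ j + ∑ i, mu i * h z θ i

def lagrangianGrad (f : E → P → ℝ) (g : E → P → ι → ℝ) (h : E → P → κ → ℝ) (z : E)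
    (lam : ι → ℝ) (mu : κ → ℝ) (θ : P) : E →L[ℝ] ℝ :=
  fderiv ℝ (fun w => f w θ) z + ∑ j, lam j • fderiv ℝ (fun w => g w θ j) z
    + ∑ i, mu i • fderiv ℝ (fun w => h w θ i) z

theorem fderiv_lagrangianGrad_multipliers (z : E) (θ : P) (m₀ : (ι → ℝ) × (κ → ℝ))
    (dl : ι → ℝ) (dm : κ → ℝ) :
    fderiv ℝ (fun m : (ι → ℝ) × (κ → ℝ) => lagrangianGrad f g h z m.1 m.2 θ) m₀ (dl, dm)
      = ∑ j, dl j • fderiv ℝ (fun w => g w θ j) z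
        + ∑ i, dm i • fderiv ℝ (fun w => h w θ i) z := by
  have hfst : ∀ j : ι, HasFDerivAt (fun m : (ι → ℝ) × (κ → ℝ) => m.1 j)
      ((ContinuousLinearMap.proj j).comp (.fst ℝ _ _)) m₀ := fun j =>
    ((ContinuousLinearMap.proj (R := ℝ) (φ := fun _ : ι => ℝ) j).comp
      (.fst ℝ (ι → ℝ) (κ → ℝ))).hasFDerivAt
  have hsnd : ∀ i : κ, HasFDerivAt (fun m : (ι → ℝ) × (κ → ℝ) => m.2 i)
      ((ContinuousLinearMap.proj i).comp (.snd ℝ _ _)) m₀ := fun i =>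
    ((ContinuousLinearMap.proj (R := ℝ) (φ := fun _ : κ => ℝ) i).comp
      (.snd ℝ (ι → ℝ) (κ → ℝ))).hasFDerivAt
  have hlin := ((hasFDerivAt_const (fderiv ℝ (fun w => f w θ) z) m₀).fun_add
    (HasFDerivAt.fun_sum (u := .univ) fun j _ =>
      (hfst j).smul_const (fderiv ℝ (fun w => g w θ j) z))).fun_add
    (HasFDerivAt.fun_sum (u := .univ) fun i _ =>
      (hsnd i).smul_const (fderiv ℝ (fun w => h w θ i) z))
  simp [lagrangianGrad, hlin.fderiv]

variable [NormedAddCommGroup P] [NormedSpace ℝ P]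

theorem contDiff_lagrangian {n : WithTop ℕ∞} (hf : ContDiff ℝ n fun x : E × P => f x.1 x.2)
    (hg : ContDiff ℝ n fun x : E × P => g x.1 x.2)
    (hh : ContDiff ℝ n fun x : E × P => h x.1 x.2) (lam : ι → ℝ) (mu : κ → ℝ) :
    ContDiff ℝ n fun x : E × P => lagrangian f g h lam mu x.1 x.2 :=
  (hf.add (ContDiff.sum fun j _ => contDiff_const.mul (contDiff_pi.mp hg j))).add
    (ContDiff.sum fun i _ => contDiff_const.mul (contDiff_pi.mp hh i))

theorem fderiv_lagrangian (hf : Differentiable ℝ fun x : E × P => f x.1 x.2)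
    (hg : Differentiable ℝ fun x : E × P => g x.1 x.2)
    (hh : Differentiable ℝ fun x : E × P => h x.1 x.2) (lam : ι → ℝ) (mu : κ → ℝ) (z : E)
    (θ : P) :
    fderiv ℝ (fun w => lagrangian f g h lam mu w θ) z = lagrangianGrad f g h z lam mu θ := by
  have hgj := fun j => differentiableAt_partial (F := fun z θ => g z θ j)
    (differentiable_pi.mp hg j) z θ
  have hhi := fun i => differentiableAt_partial (F := fun z θ => h z θ i)
    (differentiable_pi.mp hh i) z θ
  exact (((differentiableAt_partial hf z θ).hasFDerivAt.add
    (HasFDerivAt.fun_sum (u := .univ) fun j _ => (hgj j).hasFDerivAt.const_mul (lam j))).add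
    (HasFDerivAt.fun_sum (u := .univ) fun i _ => (hhi i).hasFDerivAt.const_mul (mu i))).fderiv

theorem stationarity_sensitivity_sub_eq_zero (hf : ContDiff ℝ 2 fun x : E × P => f x.1 x.2)
    (hg : ContDiff ℝ 2 fun x : E × P => g x.1 x.2)
    (hh : ContDiff ℝ 2 fun x : E × P => h x.1 x.2) {z₀ : E} {θ₀ : P} {lam₀ : ι → ℝ}
    {mu₀ : κ → ℝ} {x d : P → E} {lam lam₂ : P → ι → ℝ} {mu mu₂ : P → κ → ℝ}
    (hx : DifferentiableAt ℝ x θ₀) (hlam : DifferentiableAt ℝ lam θ₀)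
    (hmu : DifferentiableAt ℝ mu θ₀) (hd : DifferentiableAt ℝ d θ₀)
    (hlam₂ : DifferentiableAt ℝ lam₂ θ₀) (hmu₂ : DifferentiableAt ℝ mu₂ θ₀)
    (hx₀ : x θ₀ = z₀) (hlam₀ : lam θ₀ = lam₀) (hmu₀ : mu θ₀ = mu₀) (hd₀ : d θ₀ = 0)
    (hlam₂₀ : lam₂ θ₀ = lam₀) (hmu₂₀ : mu₂ θ₀ = mu₀)
    (hN : ∀ᶠ θ in 𝓝 θ₀, lagrangianGrad f g h (x θ) (lam θ) (mu θ) θ = 0)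
    (hQ : ∀ᶠ θ in 𝓝 θ₀,
      fderiv ℝ (fun z => fderiv ℝ (fun w => lagrangian f g h lam₀ mu₀ w θ₀) z) z₀ (d θ)
        + lagrangianGrad f g h z₀ (lam₂ θ) (mu₂ θ) θ = 0) (v : P) :
    fderiv ℝ (fun z => fderiv ℝ (fun w => lagrangian f g h lam₀ mu₀ w θ₀) z) z₀
        (fderiv ℝ x θ₀ v - fderiv ℝ d θ₀ v)
      + ∑ j, (fderiv ℝ lam θ₀ v j - fderiv ℝ lam₂ θ₀ v j) • fderiv ℝ (fun w => g w θ₀ j) z₀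
      + ∑ i, (fderiv ℝ mu θ₀ v i - fderiv ℝ mu₂ θ₀ v i) • fderiv ℝ (fun w => h w θ₀ i) z₀
      = 0 := by
  have hfd := (contDiff_fderiv_partial hf).differentiable one_ne_zero
  have hgd := fun j => (contDiff_fderiv_partial (F := fun z θ => g z θ j)
    (contDiff_pi.mp hg j)).differentiable one_ne_zero
  have hhd := fun i => (contDiff_fderiv_partial (F := fun z θ => h z θ i)
    (contDiff_pi.mp hh i)).differentiable one_ne_zero
  have hΨ : Differentiable ℝ fun w : E × ((ι → ℝ) × (κ → ℝ)) × P =>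
      lagrangianGrad f g h w.1 w.2.1.1 w.2.1.2 w.2.2 := by
    unfold lagrangianGrad
    fun_prop
  have hH : (fun z => lagrangianGrad f g h z lam₀ mu₀ θ₀)
      = fun z => fderiv ℝ (fun w => lagrangian f g h lam₀ mu₀ w θ₀) z :=
    funext fun z => (fderiv_lagrangian (hf.differentiable two_ne_zero)
      (hg.differentiable two_ne_zero) (hh.differentiable two_ne_zero) lam₀ mu₀ z θ₀).symm
  have key := linearized_sensitivity_sub_eq_zero (m₀ := (lam₀, mu₀)) (hΨ _)
    (differentiableAt_const _) (by exact congrArg (fderiv ℝ · z₀) hH.symm) hx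
    (hlam.prodMk hmu) hd (hlam₂.prodMk hmu₂) hx₀ (by rw [hlam₀, hmu₀]) hd₀
    (by rw [hlam₂₀, hmu₂₀]) hN hQ v
  rw [hlam.fderiv_prodMk hmu, hlam₂.fderiv_prodMk hmu₂] at key
  simp only [hH, ContinuousLinearMap.prod_apply, Prod.mk_sub_mk,
    fderiv_lagrangianGrad_multipliers, Pi.sub_apply] at key
  rw [← key, add_assoc]

end Lagrangian

theorem nlp_qp_sensitivities_coincide_general
    {n p m q : ℕ}
    (f : (Fin n → ℝ) → (Fin p → ℝ) → ℝ)
    (g : (Fin n → ℝ) → (Fin p → ℝ) → Fin m → ℝ)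
    (h : (Fin n → ℝ) → (Fin p → ℝ) → Fin q → ℝ)
    (hf : ContDiff ℝ 2 (fun x : (Fin n → ℝ) × (Fin p → ℝ) => f x.1 x.2))
    (hg : ContDiff ℝ 2 (fun x : (Fin n → ℝ) × (Fin p → ℝ) => g x.1 x.2))
    (hh : ContDiff ℝ 2 (fun x : (Fin n → ℝ) × (Fin p → ℝ) => h x.1 x.2))
    (θbar : Fin p → ℝ) (zs : Fin n → ℝ) (lams : Fin m → ℝ) (mus : Fin q → ℝ)
    -- strict complementarity:
    (hstrict : ∀ i, h zs θbar i = 0 → 0 < mus i)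
    -- LICQ:
    (hLICQ : LinearIndependent ℝ (Sum.elim
        (fun j : Fin m => fderiv ℝ (fun z => g z θbar j) zs)
        (fun i : {i : Fin q // h zs θbar i = 0} =>
          fderiv ℝ (fun z => h z θbar (i : Fin q)) zs)))
    -- SOSC:
    (hSOSC : ∀ d : Fin n → ℝ, d ≠ 0 →
        (∀ j, fderiv ℝ (fun z => g z θbar j) zs d = 0) →
        (∀ i, h zs θbar i = 0 → fderiv ℝ (fun z => h z θbar i) zs d = 0) →
        0 < fderiv ℝ (fun z => fderiv ℝ (fun w =>
              f w θbar + ∑ j, lams j * g w θbar j + ∑ i, mus i * h w θbar i) z d) zs d)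
    -- local NLP KKT-solution maps around θ̄:
    (zsol : (Fin p → ℝ) → (Fin n → ℝ))
    (lsol : (Fin p → ℝ) → (Fin m → ℝ))
    (msol : (Fin p → ℝ) → (Fin q → ℝ))
    (hzsol : ContDiffAt ℝ 1 zsol θbar) (hlsol : ContDiffAt ℝ 1 lsol θbar)
    (hmsol : ContDiffAt ℝ 1 msol θbar)
    (hzsol0 : zsol θbar = zs) (hlsol0 : lsol θbar = lams) (hmsol0 : msol θbar = mus)
    (hnlp : ∀ᶠ θ in 𝓝 θbar,
      (fderiv ℝ (fun z => f z θ) (zsol θ)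
          + ∑ j, lsol θ j • fderiv ℝ (fun z => g z θ j) (zsol θ)
          + ∑ i, msol θ i • fderiv ℝ (fun z => h z θ i) (zsol θ) = 0) ∧
      g (zsol θ) θ = 0 ∧ (∀ i, h (zsol θ) θ i ≤ 0) ∧
      (∀ i, 0 ≤ msol θ i) ∧ (∀ i, msol θ i * h (zsol θ) θ i = 0))
    -- local KKT-solution maps of the exact-Hessian QP subproblem around θ̄:
    (dzqp : (Fin p → ℝ) → (Fin n → ℝ))
    (lqp : (Fin p → ℝ) → (Fin m → ℝ))
    (mqp : (Fin p → ℝ) → (Fin q → ℝ))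
    (hdzqp : ContDiffAt ℝ 1 dzqp θbar) (hlqp : ContDiffAt ℝ 1 lqp θbar)
    (hmqp : ContDiffAt ℝ 1 mqp θbar)
    (hdzqp0 : dzqp θbar = 0) (hlqp0 : lqp θbar = lams) (hmqp0 : mqp θbar = mus)
    (hqp : ∀ᶠ θ in 𝓝 θbar,
      ((fderiv ℝ (fun z => fderiv ℝ (fun w =>
            f w θbar + ∑ j, lams j * g w θbar j + ∑ i, mus i * h w θbar i) z) zs)
          (dzqp θ)
          + fderiv ℝ (fun z => f z θ) zs
          + ∑ j, lqp θ j • fderiv ℝ (fun z => g z θ j) zs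
          + ∑ i, mqp θ i • fderiv ℝ (fun z => h z θ i) zs = 0) ∧
      (∀ j, g zs θ j + fderiv ℝ (fun z => g z θ j) zs (dzqp θ) = 0) ∧
      (∀ i, h zs θ i + fderiv ℝ (fun z => h z θ i) zs (dzqp θ) ≤ 0) ∧
      (∀ i, 0 ≤ mqp θ i) ∧
      (∀ i, mqp θ i * (h zs θ i + fderiv ℝ (fun z => h z θ i) zs (dzqp θ)) = 0)) :
    zsol θbar = zs + dzqp θbar ∧
    fderiv ℝ zsol θbar = fderiv ℝ dzqp θbar ∧
    fderiv ℝ lsol θbar = fderiv ℝ lqp θbar ∧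
    fderiv ℝ msol θbar = fderiv ℝ mqp θbar := by
  have hzd := hzsol.differentiableAt one_ne_zero
  have hdzd := hdzqp.differentiableAt one_ne_zero
  have hmd := hmsol.differentiableAt one_ne_zero
  have hmqd := hmqp.differentiableAt one_ne_zero
  have hequality := fun v j => equality_constraint_sensitivity_sub_eq_zero
    (F := fun z θ => g z θ j) (contDiff_pi.mp hg j) hzd hdzd hzsol0 hdzqp0
    (hnlp.mono fun θ hθ => congrFun hθ.2.1 j) (hqp.mono fun θ hθ => hθ.2.1 j) v
  have hinequality := fun i v => inequality_constraint_sensitivity (F := fun z θ => h z θ i)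
    (contDiff_pi.mp hh i) hzd hdzd hmd hmqd hzsol0 hdzqp0 (congrFun hmsol0 i)
    (congrFun hmqp0 i) (hstrict i) (hnlp.mono fun θ hθ => hθ.2.2.2.2 i)
    (hqp.mono fun θ hθ => hθ.2.2.2.2 i) v
  have hstationarity := stationarity_sensitivity_sub_eq_zero hf hg hh hzd
    (hlsol.differentiableAt one_ne_zero) hmd hdzd (hlqp.differentiableAt one_ne_zero) hmqd
    hzsol0 hlsol0 hmsol0 hdzqp0 hlqp0 hmqp0 (hnlp.mono fun θ hθ => hθ.1)
    (hqp.mono fun θ hθ => by rw [lagrangianGrad, ← add_assoc, ← add_assoc]; exact hθ.1)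
  have hkkt := fun v => eq_zero_of_linearized_kkt (a := fun j => fderiv ℝ (fun z => g z θbar j) zs)
    (b := fun i => fderiv ℝ (fun z => h z θbar i) zs) (active := fun i => h zs θbar i = 0) hLICQ
    (fun d hd hgd hhd => (hSOSC d hd hgd hhd).trans_eq
      (fderiv_fderiv_partial_apply (contDiff_lagrangian hf hg hh lams mus) zs θbar d d))
    (hstationarity v) (hequality v) (fun i => (hinequality i v).1) (fun i => (hinequality i v).2)
  refine ⟨by rw [hzsol0, hdzqp0, add_zero], ?_, ?_, ?_⟩ <;> ext1 v
  · exact sub_eq_zero.mp (hkkt v).1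
  · exact sub_eq_zero.mp (hkkt v).2.1
  · exact sub_eq_zero.mp (hkkt v).2.2

/-- **Theorem 2 (NLP and QP sensitivities coincide).**
Let `(z*, λ*, μ*)` be a KKT point of the parametric NLP at `θ̄` satisfying LICQ, SOSC and
strict complementarity, and let `Q* = ∇²_zz L(z*, λ*, μ*; θ̄)` be the exact Lagrangian
Hessian.  If `θ ↦ (z^sol(θ), λ^sol(θ), μ^sol(θ))` is a C¹ local KKT-solution map of the
NLP around `θ̄` through `(z*, λ*, μ*)`, and `θ ↦ (Δz_QP(θ), λ_QP(θ), μ_QP(θ))` is a C¹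
local KKT-solution map of the exact-Hessian QP subproblem around `θ̄` with
`Δz_QP(θ̄) = 0`, `λ_QP(θ̄) = λ*`, `μ_QP(θ̄) = μ*`, then `z^sol(θ̄) = z* + Δz_QP(θ̄)` and
the derivatives at `θ̄` coincide. -/
theorem nlp_qp_sensitivities_coincide
    {n p m q : ℕ}
    (f : (Fin n → ℝ) → (Fin p → ℝ) → ℝ)
    (g : (Fin n → ℝ) → (Fin p → ℝ) → Fin m → ℝ)
    (h : (Fin n → ℝ) → (Fin p → ℝ) → Fin q → ℝ)
    (hf : ContDiff ℝ 2 (fun x : (Fin n → ℝ) × (Fin p → ℝ) => f x.1 x.2))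
    (hg : ContDiff ℝ 2 (fun x : (Fin n → ℝ) × (Fin p → ℝ) => g x.1 x.2))
    (hh : ContDiff ℝ 2 (fun x : (Fin n → ℝ) × (Fin p → ℝ) => h x.1 x.2))
    (θbar : Fin p → ℝ) (zs : Fin n → ℝ) (lams : Fin m → ℝ) (mus : Fin q → ℝ)
    -- (z*, λ*, μ*) is a KKT point at θ̄:
    (hstat : fderiv ℝ (fun z => f z θbar) zs
        + ∑ j, lams j • fderiv ℝ (fun z => g z θbar j) zs
        + ∑ i, mus i • fderiv ℝ (fun z => h z θbar i) zs = 0)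
    (hfeas_g : g zs θbar = 0)
    (hfeas_h : ∀ i, h zs θbar i ≤ 0)
    (hmu_nonneg : ∀ i, 0 ≤ mus i)
    (hcompl : ∀ i, mus i * h zs θbar i = 0)
    -- strict complementarity:
    (hstrict : ∀ i, h zs θbar i = 0 → 0 < mus i)
    -- LICQ:
    (hLICQ : LinearIndependent ℝ (Sum.elim
        (fun j : Fin m => fderiv ℝ (fun z => g z θbar j) zs)
        (fun i : {i : Fin q // h zs θbar i = 0} =>
          fderiv ℝ (fun z => h z θbar (i : Fin q)) zs)))
    -- SOSC:
    (hSOSC : ∀ d : Fin n → ℝ, d ≠ 0 →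
        (∀ j, fderiv ℝ (fun z => g z θbar j) zs d = 0) →
        (∀ i, h zs θbar i = 0 → fderiv ℝ (fun z => h z θbar i) zs d = 0) →
        0 < fderiv ℝ (fun z => fderiv ℝ (fun w =>
              f w θbar + ∑ j, lams j * g w θbar j + ∑ i, mus i * h w θbar i) z d) zs d)
    -- local NLP KKT-solution maps around θ̄:
    (zsol : (Fin p → ℝ) → (Fin n → ℝ))
    (lsol : (Fin p → ℝ) → (Fin m → ℝ))
    (msol : (Fin p → ℝ) → (Fin q → ℝ))
    (hzsol : ContDiffAt ℝ 1 zsol θbar) (hlsol : ContDiffAt ℝ 1 lsol θbar)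
    (hmsol : ContDiffAt ℝ 1 msol θbar)
    (hzsol0 : zsol θbar = zs) (hlsol0 : lsol θbar = lams) (hmsol0 : msol θbar = mus)
    (hnlp : ∀ᶠ θ in 𝓝 θbar,
      (fderiv ℝ (fun z => f z θ) (zsol θ)
          + ∑ j, lsol θ j • fderiv ℝ (fun z => g z θ j) (zsol θ)
          + ∑ i, msol θ i • fderiv ℝ (fun z => h z θ i) (zsol θ) = 0) ∧
      g (zsol θ) θ = 0 ∧ (∀ i, h (zsol θ) θ i ≤ 0) ∧
      (∀ i, 0 ≤ msol θ i) ∧ (∀ i, msol θ i * h (zsol θ) θ i = 0))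
    -- local KKT-solution maps of the exact-Hessian QP subproblem around θ̄:
    (dzqp : (Fin p → ℝ) → (Fin n → ℝ))
    (lqp : (Fin p → ℝ) → (Fin m → ℝ))
    (mqp : (Fin p → ℝ) → (Fin q → ℝ))
    (hdzqp : ContDiffAt ℝ 1 dzqp θbar) (hlqp : ContDiffAt ℝ 1 lqp θbar)
    (hmqp : ContDiffAt ℝ 1 mqp θbar)
    (hdzqp0 : dzqp θbar = 0) (hlqp0 : lqp θbar = lams) (hmqp0 : mqp θbar = mus)
    (hqp : ∀ᶠ θ in 𝓝 θbar,
      ((fderiv ℝ (fun z => fderiv ℝ (fun w =>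
            f w θbar + ∑ j, lams j * g w θbar j + ∑ i, mus i * h w θbar i) z) zs)
          (dzqp θ)
          + fderiv ℝ (fun z => f z θ) zs
          + ∑ j, lqp θ j • fderiv ℝ (fun z => g z θ j) zs
          + ∑ i, mqp θ i • fderiv ℝ (fun z => h z θ i) zs = 0) ∧
      (∀ j, g zs θ j + fderiv ℝ (fun z => g z θ j) zs (dzqp θ) = 0) ∧
      (∀ i, h zs θ i + fderiv ℝ (fun z => h z θ i) zs (dzqp θ) ≤ 0) ∧
      (∀ i, 0 ≤ mqp θ i) ∧
      (∀ i, mqp θ i * (h zs θ i + fderiv ℝ (fun z => h z θ i) zs (dzqp θ)) = 0)) :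
    zsol θbar = zs + dzqp θbar ∧
    fderiv ℝ zsol θbar = fderiv ℝ dzqp θbar ∧
    fderiv ℝ lsol θbar = fderiv ℝ lqp θbar ∧
    fderiv ℝ msol θbar = fderiv ℝ mqp θbar :=
  nlp_qp_sensitivities_coincide_general f g h hf hg hh θbar zs lams mus hstrict hLICQ hSOSC zsol
    lsol msol hzsol hlsol hmsol hzsol0 hlsol0 hmsol0 hnlp dzqp lqp mqp hdzqp hlqp hmqp hdzqp0 hlqp0
    hmqp0 hqp
end

section
/- Consider the parametric NLP min_{z∈ℝⁿ} f(z;θ) s.t. g(z;θ)=0, h(z;θ)≤0 and suppose (z*,λ*,μ*) is a KKT point at θ̄ satisfying LICQ, SOSC and strict complementarity. Then there exist τ̄ > 0, a constant C > 0, and a continuously differentiable map τ ↦ (z(τ),λ(τ),μ(τ)) on (0, τ̄) such that for each τ ∈ (0, τ̄) the triple (z(τ),λ(τ),μ(τ)) satisfies the smoothed KKT system at θ̄: ∇_z f(z;θ̄) + ∇_z g(z;θ̄)λ + ∇_z h(z;θ̄)μ = 0, g(z;θ̄)=0, hᵢ(z;θ̄) < 0 and μᵢ > 0 with −μᵢ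 hᵢ(z;θ̄) = τ for all i; moreover lim_{τ→0⁺}(z(τ),λ(τ),μ(τ)) = (z*,λ*,μ*) and ‖z(τ) − z*‖ ≤ Cτ for all τ ∈ (0,τ̄). -/
/-!
The barrier parameter is treated as an extra unknown: the smoothed KKT map
`Φ(τ, z, λ, μ) = (τ, ∇_z L(z, λ, μ), g(z), μ ∘ h(z) + τ)` is C¹ and vanishes at `(0, z*, λ*, μ*)`.
Its derivative there is injective: a kernel vector has `dτ = 0`; strict complementarity kills
`dμ` on the inactive constraints and `∇hᵢ · dz` on the active ones, so testing the stationarity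
row against `dz` gives `∇²L(dz, dz) = 0` and SOSC forces `dz = 0`; LICQ then forces `dλ = dμ = 0`.
By the inverse function theorem `τ ↦ Φ⁻¹(τ, 0)` is C¹ near `0`, hence Lipschitz, which is the
`O(τ)` bound. Continuity keeps the active multipliers positive and the inactive constraints
negative near `τ = 0`, and `μᵢ hᵢ = -τ < 0` then gives both signs for every `i`.
-/

open Filter Topology Set

theorem eq_zero_of_linearIndependent_active {E ι κ : Type*} [AddCommGroup E] [Module ℝ E]
    [Fintype ι] [Fintype κ] {A : ι → E} {B : κ → E} {c : κ → ℝ}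
    (hLICQ : LinearIndependent ℝ (Sum.elim A fun i : {i // c i = 0} => B i))
    {dl : ι → ℝ} {dm : κ → ℝ} (hdm : ∀ i, c i ≠ 0 → dm i = 0)
    (hsum : ∑ j, dl j • A j + ∑ i, dm i • B i = 0) : dl = 0 ∧ dm = 0 := by
  classical
  have hinactive : ∑ i : {i // ¬c i = 0}, dm i • B i = 0 :=
    Finset.sum_eq_zero fun i _ => by rw [hdm i i.2, zero_smul]
  rw [← Fintype.sum_subtype_add_sum_subtype (fun i => c i = 0), hinactive, add_zero] at hsum
  have hzero := Fintype.linearIndependent_iff.1 hLICQ (Sum.elim dl fun i => dm i)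
    (by simpa [Fintype.sum_sum_type] using hsum)
  refine ⟨funext fun j => hzero (.inl j), funext fun i => ?_⟩
  by_cases hi : c i = 0
  · exact hzero (.inr ⟨i, hi⟩)
  · exact hdm i hi

theorem exists_contDiffAt_lift_of_injective_fderiv {X Y : Type*} [NormedAddCommGroup X]
    [NormedSpace ℝ X] [FiniteDimensional ℝ X] [NormedAddCommGroup Y] [NormedSpace ℝ Y]
    [FiniteDimensional ℝ Y] {F : X → Y} {x₀ : X}
    (hF : ContDiffAt ℝ 1 F x₀) (hinj : Function.Injective (fderiv ℝ F x₀))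
    (hrank : Module.finrank ℝ X = Module.finrank ℝ Y) {c : ℝ → Y} (hc : ContDiffAt ℝ 1 c 0)
    (hc0 : c 0 = F x₀) :
    ∃ x : ℝ → X, ContDiffAt ℝ 1 x 0 ∧ x 0 = x₀ ∧ ∀ᶠ τ in 𝓝 0, F (x τ) = c τ := by
  have := FiniteDimensional.complete ℝ X
  let e : X ≃L[ℝ] Y := (LinearEquiv.ofInjectiveOfFinrankEq
    (fderiv ℝ F x₀ : X →ₗ[ℝ] Y) hinj hrank).toContinuousLinearEquiv
  have hF' : HasFDerivAt F (e : X →L[ℝ] Y) x₀ := (hF.differentiableAt one_ne_zero).hasFDerivAt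
  refine ⟨hF.localInverse hF' one_ne_zero ∘ c, ?_, ?_, ?_⟩
  · exact (hc0 ▸ hF.to_localInverse hF' one_ne_zero).comp 0 hc
  · simpa [hc0] using hF.localInverse_apply_image hF' one_ne_zero
  · have hright := (hF.hasStrictFDerivAt' hF' one_ne_zero).eventually_right_inverse
    rw [← hc0] at hright
    exact hc.continuousAt.eventually hright

theorem exists_Ioo_contDiffOn_and_norm_sub_le {X : Type*} [NormedAddCommGroup X]
    [NormedSpace ℝ X] {x : ℝ → X} (hx : ContDiffAt ℝ 1 x 0) {P : ℝ → Prop}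
    (hP : ∀ᶠ τ in 𝓝 0, P τ) :
    ∃ ε > 0, ∃ C > 0, ContDiffOn ℝ 1 x (Ioo 0 ε) ∧
      ∀ τ ∈ Ioo 0 ε, P τ ∧ ‖x τ - x 0‖ ≤ C * τ := by
  obtain ⟨u, hu, hxu⟩ := hx.contDiffOn le_rfl (by simp)
  obtain ⟨K, t, ht, hlip⟩ := hx.exists_lipschitzOnWith
  obtain ⟨ε, hε, hball⟩ := Metric.mem_nhds_iff.1 (inter_mem (inter_mem hu ht) hP)
  have hIoo : Ioo 0 ε ⊆ Metric.ball 0 ε := fun τ hτ => by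
    rw [Metric.mem_ball, Real.dist_eq, sub_zero, abs_of_pos hτ.1]
    exact hτ.2
  refine ⟨ε, hε, K + 1, by positivity, hxu.mono fun τ hτ => (hball (hIoo hτ)).1.1,
    fun τ hτ => ⟨(hball (hIoo hτ)).2, ?_⟩⟩
  calc ‖x τ - x 0‖ ≤ K * ‖τ - 0‖ := hlip.norm_sub_le (hball (hIoo hτ)).1.2 (mem_of_mem_nhds ht)
    _ ≤ (K + 1) * τ := by
      rw [sub_zero, Real.norm_of_nonneg hτ.1.le]
      nlinarith [hτ.1]

theorem eventually_forall_pos_or_neg {X κ : Type*} [TopologicalSpace X] [Finite κ]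
    {a b : X → κ → ℝ} {x₀ : X} (ha : ContinuousAt a x₀) (hb : ContinuousAt b x₀)
    (hle : ∀ i, b x₀ i ≤ 0) (hstrict : ∀ i, b x₀ i = 0 → 0 < a x₀ i) :
    ∀ᶠ x in 𝓝 x₀, ∀ i, 0 < a x i ∨ b x i < 0 := by
  refine eventually_all.2 fun i => ?_
  rcases (hle i).lt_or_eq with hinactive | hactive
  · exact ((continuous_apply i).continuousAt.comp hb |>.eventually_lt_const hinactive).mono
      fun _ => Or.inr
  · exact ((continuous_apply i).continuousAt.comp ha |>.eventually_const_lt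
      (hstrict i hactive)).mono fun _ => Or.inl

noncomputable section

namespace SmoothedKKT

variable {E ι κ : Type*} [NormedAddCommGroup E] [NormedSpace ℝ E] [Fintype ι] [Fintype κ]
  (f : E → ℝ) (g : E → ι → ℝ) (h : E → κ → ℝ)

def lagrangian (lam : ι → ℝ) (mu : κ → ℝ) (z : E) : ℝ :=
  f z + ∑ j, lam j * g z j + ∑ i, mu i * h z i

def lagrangianGrad (lam : ι → ℝ) (mu : κ → ℝ) (z : E) : E →L[ℝ] ℝ :=
  fderiv ℝ f z + ∑ j, lam j • fderiv ℝ (fun w => g w j) z + ∑ i, mu i • fderiv ℝ (fun w => h w i) z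

/-- The barrier parameter is carried along as the first coordinate, so that the inverse function
theorem at `τ = 0` produces the whole central path at once. -/
def smoothedKKTMap (p : ℝ × E × (ι → ℝ) × (κ → ℝ)) : ℝ × (E →L[ℝ] ℝ) × (ι → ℝ) × (κ → ℝ) :=
  (p.1, lagrangianGrad f g h p.2.2.1 p.2.2.2 p.2.1, g p.2.1, fun i => p.2.2.2 i * h p.2.1 i + p.1)

variable {f g h}

theorem fderiv_lagrangian (hf : Differentiable ℝ f) (hg : Differentiable ℝ g)
    (hh : Differentiable ℝ h) (lam : ι → ℝ) (mu : κ → ℝ) :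
    fderiv ℝ (lagrangian f g h lam mu) = lagrangianGrad f g h lam mu := by
  ext1 z
  exact (((hf z).hasFDerivAt.add (HasFDerivAt.fun_sum fun j _ =>
    ((differentiable_pi.1 hg j z).hasFDerivAt.const_mul (lam j)))).add
    (HasFDerivAt.fun_sum fun i _ =>
      ((differentiable_pi.1 hh i z).hasFDerivAt.const_mul (mu i)))).fderiv

theorem contDiff_lagrangianGrad (hf : ContDiff ℝ 2 f) (hg : ContDiff ℝ 2 g) (hh : ContDiff ℝ 2 h) :
    ContDiff ℝ 1 (fun x : E × (ι → ℝ) × (κ → ℝ) => lagrangianGrad f g h x.2.1 x.2.2 x.1) := by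
  have hD : ∀ {F : E → ℝ}, ContDiff ℝ 2 F →
      ContDiff ℝ 1 (fun x : E × (ι → ℝ) × (κ → ℝ) => fderiv ℝ F x.1) :=
    fun hF => (hF.fderiv_right (by norm_num)).comp contDiff_fst
  have hgj := fun j => hD (contDiff_pi.1 hg j)
  have hhi := fun i => hD (contDiff_pi.1 hh i)
  unfold lagrangianGrad
  fun_prop

theorem differentiable_lagrangianGrad (hf : ContDiff ℝ 2 f) (hg : ContDiff ℝ 2 g)
    (hh : ContDiff ℝ 2 h) (lam : ι → ℝ) (mu : κ → ℝ) :
    Differentiable ℝ (lagrangianGrad f g h lam mu) := by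
  have hD : ∀ {F : E → ℝ}, ContDiff ℝ 2 F → Differentiable ℝ (fderiv ℝ F) :=
    fun hF => (hF.fderiv_right (by norm_num)).differentiable one_ne_zero
  have hgj := fun j => hD (contDiff_pi.1 hg j)
  have hhi := fun i => hD (contDiff_pi.1 hh i)
  unfold lagrangianGrad
  fun_prop

theorem contDiff_smoothedKKTMap (hf : ContDiff ℝ 2 f) (hg : ContDiff ℝ 2 g) (hh : ContDiff ℝ 2 h) :
    ContDiff ℝ 1 (smoothedKKTMap f g h) := by
  have hL := (contDiff_lagrangianGrad hf hg hh).comp (contDiff_snd (E := ℝ))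
  have hg1 : ContDiff ℝ 1 g := hg.of_le (by norm_num)
  have hh1 : ContDiff ℝ 1 h := hh.of_le (by norm_num)
  unfold smoothedKKTMap
  fun_prop

/-- Splitting off the multiplier increments exposes the `(λ, μ)`-derivative of the stationarity
block without expanding the Hessian of the Lagrangian. -/
theorem lagrangianGrad_eq_add_sub (lam lam' : ι → ℝ) (mu mu' : κ → ℝ) (z : E) :
    lagrangianGrad f g h lam' mu' z = lagrangianGrad f g h lam mu z
      + ∑ j, (lam' j - lam j) • fderiv ℝ (fun w => g w j) z
      + ∑ i, (mu' i - mu i) • fderiv ℝ (fun w => h w i) z := by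
  simp only [lagrangianGrad, sub_smul, Finset.sum_sub_distrib]
  abel

theorem fderiv_smoothedKKTMap_apply (hf : ContDiff ℝ 2 f) (hg : ContDiff ℝ 2 g)
    (hh : ContDiff ℝ 2 h) (τ : ℝ) (z : E) (lam : ι → ℝ) (mu : κ → ℝ)
    (v : ℝ × E × (ι → ℝ) × (κ → ℝ)) :
    fderiv ℝ (smoothedKKTMap f g h) (τ, z, lam, mu) v =
      (v.1, fderiv ℝ (lagrangianGrad f g h lam mu) z v.2.1
          + ∑ j, v.2.2.1 j • fderiv ℝ (fun w => g w j) z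
          + ∑ i, v.2.2.2 i • fderiv ℝ (fun w => h w i) z,
        fun j => fderiv ℝ (fun w => g w j) z v.2.1,
        fun i => mu i * fderiv ℝ (fun w => h w i) z v.2.1 + h z i * v.2.2.2 i + v.1) := by
  set p : ℝ × E × (ι → ℝ) × (κ → ℝ) := (τ, z, lam, mu)
  have hz : HasFDerivAt (𝕜 := ℝ) (fun x : ℝ × E × (ι → ℝ) × (κ → ℝ) => x.2.1) _ p :=
    hasFDerivAt_snd.fst
  have hlam : HasFDerivAt (𝕜 := ℝ) (fun x : ℝ × E × (ι → ℝ) × (κ → ℝ) => x.2.2.1) _ p :=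
    hasFDerivAt_snd.snd.fst
  have hmu : HasFDerivAt (𝕜 := ℝ) (fun x : ℝ × E × (ι → ℝ) × (κ → ℝ) => x.2.2.2) _ p :=
    hasFDerivAt_snd.snd.snd
  have hcomp : ∀ {u : E → ℝ}, DifferentiableAt ℝ u z →
      HasFDerivAt (𝕜 := ℝ) (fun x : ℝ × E × (ι → ℝ) × (κ → ℝ) => u x.2.1) _ p :=
    fun hu => (hu.hasFDerivAt.comp p hz :)
  have hD : ∀ {F : E → ℝ}, ContDiff ℝ 2 F →
      HasFDerivAt (𝕜 := ℝ) (fun x : ℝ × E × (ι → ℝ) × (κ → ℝ) => fderiv ℝ F x.2.1) _ p :=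
    fun hF =>
      (((hF.fderiv_right (by norm_num)).differentiable one_ne_zero z).hasFDerivAt.comp p hz :)
  have hfix := ((differentiable_lagrangianGrad hf hg hh lam mu z).hasFDerivAt.comp p hz :)
  have hshift_g := HasFDerivAt.fun_sum (u := Finset.univ) fun j _ =>
    ((hasFDerivAt_pi'.1 hlam j).sub_const (lam j)).fun_smul (hD (contDiff_pi.1 hg j))
  have hshift_h := HasFDerivAt.fun_sum (u := Finset.univ) fun i _ =>
    ((hasFDerivAt_pi'.1 hmu i).sub_const (mu i)).fun_smul (hD (contDiff_pi.1 hh i))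
  have hstat := ((hfix.add hshift_g).add hshift_h).congr_of_eventuallyEq
    (f₁ := fun x => lagrangianGrad f g h x.2.2.1 x.2.2.2 x.2.1)
    (.of_forall fun x => lagrangianGrad_eq_add_sub lam x.2.2.1 mu x.2.2.2 x.2.1)
  have hgz := hasFDerivAt_pi.2 fun j =>
    hcomp ((contDiff_pi.1 hg j).differentiable (by norm_num) z)
  have hcompl := hasFDerivAt_pi.2 fun i =>
    ((hasFDerivAt_pi'.1 hmu i).mul
      (hcomp ((contDiff_pi.1 hh i).differentiable (by norm_num) z))).add (hasFDerivAt_fst (p := p))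
  have hΦ : HasFDerivAt (𝕜 := ℝ) (smoothedKKTMap f g h) _ p :=
    hasFDerivAt_fst.prodMk (hstat.prodMk (hgz.prodMk hcompl))
  rw [hΦ.fderiv]
  simp [p]

theorem eq_zero_of_kkt_jacobian_eq_zero (H : E →L[ℝ] E →L[ℝ] ℝ) (A : ι → E →L[ℝ] ℝ)
    (B : κ → E →L[ℝ] ℝ) {c mu : κ → ℝ} (hcompl : ∀ i, mu i * c i = 0)
    (hstrict : ∀ i, c i = 0 → 0 < mu i)
    (hLICQ : LinearIndependent ℝ (Sum.elim A fun i : {i // c i = 0} => B i))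
    (hSOSC : ∀ d, d ≠ 0 → (∀ j, A j d = 0) → (∀ i, c i = 0 → B i d = 0) → 0 < H d d)
    {dz : E} {dl : ι → ℝ} {dm : κ → ℝ}
    (hstat : H dz + ∑ j, dl j • A j + ∑ i, dm i • B i = 0) (heq : ∀ j, A j dz = 0)
    (hineq : ∀ i, mu i * B i dz + c i * dm i = 0) : dz = 0 ∧ dl = 0 ∧ dm = 0 := by
  have hdm : ∀ i, c i ≠ 0 → dm i = 0 := fun i hi => by
    have hmu : mu i = 0 := (mul_eq_zero.1 (hcompl i)).resolve_right hi
    simpa [hmu, hi] using hineq i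
  have hB : ∀ i, c i = 0 → B i dz = 0 := fun i hi => by
    simpa [hi, (hstrict i hi).ne'] using hineq i
  have hcurv : H dz dz = 0 := by
    have hterm : ∀ i, dm i * B i dz = 0 := fun i => by
      by_cases hi : c i = 0
      · rw [hB i hi, mul_zero]
      · rw [hdm i hi, zero_mul]
    simpa [heq, hterm] using congrArg (fun L => L dz) hstat
  obtain rfl : dz = 0 := by
    by_contra hne
    exact (hSOSC dz hne heq hB).ne' hcurv
  simpa using eq_zero_of_linearIndependent_active hLICQ hdm (by simpa using hstat)

theorem smoothedKKTMap_eq_iff {p : ℝ × E × (ι → ℝ) × (κ → ℝ)} {τ : ℝ} :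
    smoothedKKTMap f g h p = (τ, 0) ↔ p.1 = τ ∧ lagrangianGrad f g h p.2.2.1 p.2.2.2 p.2.1 = 0 ∧
      g p.2.1 = 0 ∧ ∀ i, p.2.2.2 i * h p.2.1 i + p.1 = 0 := by
  simp [smoothedKKTMap, Prod.ext_iff, funext_iff]

theorem fderiv_fderiv_lagrangian_apply (hf : ContDiff ℝ 2 f) (hg : ContDiff ℝ 2 g)
    (hh : ContDiff ℝ 2 h) (lam : ι → ℝ) (mu : κ → ℝ) (z d : E) :
    fderiv ℝ (fun w => fderiv ℝ (lagrangian f g h lam mu) w d) z d =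
      fderiv ℝ (lagrangianGrad f g h lam mu) z d d := by
  rw [fderiv_lagrangian (hf.differentiable (by norm_num)) (hg.differentiable (by norm_num))
    (hh.differentiable (by norm_num)),
    fderiv_clm_apply (differentiable_lagrangianGrad hf hg hh lam mu z) (differentiableAt_const d)]
  simp

theorem injective_fderiv_smoothedKKTMap (hf : ContDiff ℝ 2 f) (hg : ContDiff ℝ 2 g)
    (hh : ContDiff ℝ 2 h) (τ : ℝ) {z : E} {lam : ι → ℝ} {mu : κ → ℝ}
    (hcompl : ∀ i, mu i * h z i = 0) (hstrict : ∀ i, h z i = 0 → 0 < mu i)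
    (hLICQ : LinearIndependent ℝ (Sum.elim (fun j => fderiv ℝ (fun w => g w j) z)
      fun i : {i // h z i = 0} => fderiv ℝ (fun w => h w i) z))
    (hSOSC : ∀ d, d ≠ 0 → (∀ j, fderiv ℝ (fun w => g w j) z d = 0) →
      (∀ i, h z i = 0 → fderiv ℝ (fun w => h w i) z d = 0) →
      0 < fderiv ℝ (lagrangianGrad f g h lam mu) z d d) :
    Function.Injective (fderiv ℝ (smoothedKKTMap f g h) (τ, z, lam, mu)) := by
  rw [injective_iff_map_eq_zero]
  rintro ⟨dt, dz, dl, dm⟩ hv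
  rw [fderiv_smoothedKKTMap_apply hf hg hh] at hv
  simp only [Prod.mk_eq_zero, funext_iff] at hv
  obtain ⟨rfl, hstat, heq, hineq⟩ := hv
  simp only [Pi.zero_apply, add_zero] at heq hineq
  obtain ⟨rfl, rfl, rfl⟩ := eq_zero_of_kkt_jacobian_eq_zero
    (fderiv ℝ (lagrangianGrad f g h lam mu) z) (fun j => fderiv ℝ (fun w => g w j) z)
    (fun i => fderiv ℝ (fun w => h w i) z) hcompl hstrict hLICQ hSOSC hstat heq hineq
  rfl

theorem finrank_smoothedKKTMap_domain_eq_codomain [FiniteDimensional ℝ E] :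
    Module.finrank ℝ (ℝ × E × (ι → ℝ) × (κ → ℝ)) =
      Module.finrank ℝ (ℝ × (E →L[ℝ] ℝ) × (ι → ℝ) × (κ → ℝ)) := by
  have hdual : Module.finrank ℝ (E →L[ℝ] ℝ) = Module.finrank ℝ E :=
    (LinearMap.toContinuousLinearMap (𝕜 := ℝ) (E := E) (F' := ℝ)).finrank_eq.symm.trans
      Subspace.dual_finrank_eq
  simp only [Module.finrank_prod, hdual]

theorem exists_central_path [FiniteDimensional ℝ E]
    (hf : ContDiff ℝ 2 f) (hg : ContDiff ℝ 2 g) (hh : ContDiff ℝ 2 h)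
    {zs : E} {lams : ι → ℝ} {mus : κ → ℝ}
    (hstat : lagrangianGrad f g h lams mus zs = 0) (hfeas_g : g zs = 0)
    (hfeas_h : ∀ i, h zs i ≤ 0) (hcompl : ∀ i, mus i * h zs i = 0)
    (hstrict : ∀ i, h zs i = 0 → 0 < mus i)
    (hLICQ : LinearIndependent ℝ (Sum.elim (fun j => fderiv ℝ (fun w => g w j) zs)
      fun i : {i // h zs i = 0} => fderiv ℝ (fun w => h w i) zs))
    (hSOSC : ∀ d, d ≠ 0 → (∀ j, fderiv ℝ (fun w => g w j) zs d = 0) →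
      (∀ i, h zs i = 0 → fderiv ℝ (fun w => h w i) zs d = 0) →
      0 < fderiv ℝ (fun z => fderiv ℝ (lagrangian f g h lams mus) z d) zs d) :
    ∃ τbar C : ℝ, 0 < τbar ∧ 0 < C ∧
      ∃ (zc : ℝ → E) (lc : ℝ → ι → ℝ) (mc : ℝ → κ → ℝ),
        ContDiffOn ℝ 1 zc (Ioo 0 τbar) ∧ ContDiffOn ℝ 1 lc (Ioo 0 τbar) ∧
        ContDiffOn ℝ 1 mc (Ioo 0 τbar) ∧
        (∀ τ ∈ Ioo (0 : ℝ) τbar, lagrangianGrad f g h (lc τ) (mc τ) (zc τ) = 0 ∧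
          g (zc τ) = 0 ∧ (∀ i, h (zc τ) i < 0) ∧ (∀ i, 0 < mc τ i) ∧
          (∀ i, -(mc τ i * h (zc τ) i) = τ)) ∧
        Tendsto (fun τ => (zc τ, lc τ, mc τ)) (𝓝[>] 0) (𝓝 (zs, lams, mus)) ∧
        (∀ τ ∈ Ioo (0 : ℝ) τbar, ‖zc τ - zs‖ ≤ C * τ) := by
  have hroot : smoothedKKTMap f g h (0, zs, lams, mus) = (0, 0) :=
    smoothedKKTMap_eq_iff.2 ⟨rfl, hstat, hfeas_g, by simpa using hcompl⟩
  have hinj := injective_fderiv_smoothedKKTMap hf hg hh 0 hcompl hstrict hLICQ fun d hd hA hB =>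
    fderiv_fderiv_lagrangian_apply hf hg hh lams mus zs d ▸ hSOSC d hd hA hB
  obtain ⟨x, hx, hx0, hxroot⟩ := exists_contDiffAt_lift_of_injective_fderiv
    (contDiff_smoothedKKTMap hf hg hh).contDiffAt hinj finrank_smoothedKKTMap_domain_eq_codomain
    (c := fun τ => (τ, 0)) (by fun_prop) hroot.symm
  have hsign : ∀ᶠ τ in 𝓝 0, ∀ i, 0 < (x τ).2.2.2 i ∨ h (x τ).2.1 i < 0 := by
    have hcont : ContinuousAt x 0 := hx.continuousAt
    have hhcont : Continuous h := hh.continuous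
    exact eventually_forall_pos_or_neg (by fun_prop) (by fun_prop) (by simpa [hx0] using hfeas_h)
      (by simpa [hx0] using hstrict)
  obtain ⟨ε, hε, C, hC, hxC, hxP⟩ := exists_Ioo_contDiffOn_and_norm_sub_le hx (hxroot.and hsign)
  refine ⟨ε, C, hε, hC, fun τ => (x τ).2.1, fun τ => (x τ).2.2.1, fun τ => (x τ).2.2.2,
    hxC.snd.fst, hxC.snd.snd.fst, hxC.snd.snd.snd, fun τ hτ => ?_, ?_, fun τ hτ => ?_⟩
  · obtain ⟨⟨hroot, hsign⟩, -⟩ := hxP τ hτ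
    obtain ⟨hτ1, hstat, hg, hcompl⟩ := smoothedKKTMap_eq_iff.1 hroot
    have hprod : ∀ i, (x τ).2.2.2 i * h (x τ).2.1 i = -τ := fun i => by
      linarith [hcompl i]
    have hsign' : ∀ i, 0 < (x τ).2.2.2 i ∧ h (x τ).2.1 i < 0 := fun i => by
      rcases hsign i with hmu | hhi
      · exact ⟨hmu, by nlinarith [hprod i, hτ.1]⟩
      · exact ⟨by nlinarith [hprod i, hτ.1], hhi⟩
    exact ⟨hstat, hg, fun i => (hsign' i).2, fun i => (hsign' i).1, fun i => by
      rw [hprod i, neg_neg]⟩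
  · have hlim := hx.continuousAt.snd.tendsto
    rw [hx0] at hlim
    exact hlim.mono_left nhdsWithin_le_nhds
  · calc ‖(x τ).2.1 - zs‖ = ‖(x τ - x 0).2.1‖ := by rw [hx0]; rfl
      _ ≤ ‖x τ - x 0‖ := (norm_fst_le _).trans (norm_snd_le _)
      _ ≤ C * τ := (hxP τ hτ).2

end SmoothedKKT

end

theorem central_path_existence_and_convergence_general
    {n p m q : ℕ}
    (f : (Fin n → ℝ) → (Fin p → ℝ) → ℝ)
    (g : (Fin n → ℝ) → (Fin p → ℝ) → Fin m → ℝ)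
    (h : (Fin n → ℝ) → (Fin p → ℝ) → Fin q → ℝ)
    (hf : ContDiff ℝ 2 (fun x : (Fin n → ℝ) × (Fin p → ℝ) => f x.1 x.2))
    (hg : ContDiff ℝ 2 (fun x : (Fin n → ℝ) × (Fin p → ℝ) => g x.1 x.2))
    (hh : ContDiff ℝ 2 (fun x : (Fin n → ℝ) × (Fin p → ℝ) => h x.1 x.2))
    (θbar : Fin p → ℝ) (zs : Fin n → ℝ) (lams : Fin m → ℝ) (mus : Fin q → ℝ)
    -- (z*, λ*, μ*) is a KKT point at θ̄:
    (hstat : fderiv ℝ (fun z => f z θbar) zs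
        + ∑ j, lams j • fderiv ℝ (fun z => g z θbar j) zs
        + ∑ i, mus i • fderiv ℝ (fun z => h z θbar i) zs = 0)
    (hfeas_g : g zs θbar = 0)
    (hfeas_h : ∀ i, h zs θbar i ≤ 0)
    (hcompl : ∀ i, mus i * h zs θbar i = 0)
    -- strict complementarity:
    (hstrict : ∀ i, h zs θbar i = 0 → 0 < mus i)
    -- LICQ:
    (hLICQ : LinearIndependent ℝ (Sum.elim
        (fun j : Fin m => fderiv ℝ (fun z => g z θbar j) zs)
        (fun i : {i : Fin q // h zs θbar i = 0} =>
          fderiv ℝ (fun z => h z θbar (i : Fin q)) zs)))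
    -- SOSC:
    (hSOSC : ∀ d : Fin n → ℝ, d ≠ 0 →
        (∀ j, fderiv ℝ (fun z => g z θbar j) zs d = 0) →
        (∀ i, h zs θbar i = 0 → fderiv ℝ (fun z => h z θbar i) zs d = 0) →
        0 < fderiv ℝ (fun z => fderiv ℝ (fun w =>
              f w θbar + ∑ j, lams j * g w θbar j + ∑ i, mus i * h w θbar i) z d) zs d) :
    ∃ τbar C : ℝ, 0 < τbar ∧ 0 < C ∧
      ∃ (zc : ℝ → (Fin n → ℝ)) (lc : ℝ → (Fin m → ℝ)) (mc : ℝ → (Fin q → ℝ)),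
        ContDiffOn ℝ 1 zc (Set.Ioo 0 τbar) ∧
        ContDiffOn ℝ 1 lc (Set.Ioo 0 τbar) ∧
        ContDiffOn ℝ 1 mc (Set.Ioo 0 τbar) ∧
        (∀ τ ∈ Set.Ioo (0 : ℝ) τbar,
          (fderiv ℝ (fun z => f z θbar) (zc τ)
              + ∑ j, lc τ j • fderiv ℝ (fun z => g z θbar j) (zc τ)
              + ∑ i, mc τ i • fderiv ℝ (fun z => h z θbar i) (zc τ) = 0) ∧
          g (zc τ) θbar = 0 ∧
          (∀ i, h (zc τ) θbar i < 0) ∧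
          (∀ i, 0 < mc τ i) ∧
          (∀ i, -(mc τ i * h (zc τ) θbar i) = τ)) ∧
        Tendsto (fun τ => (zc τ, lc τ, mc τ)) (𝓝[>] (0 : ℝ)) (𝓝 (zs, lams, mus)) ∧
        (∀ τ ∈ Set.Ioo (0 : ℝ) τbar, ‖zc τ - zs‖ ≤ C * τ) := by
  have hsection : ∀ {F : Type} [NormedAddCommGroup F] [NormedSpace ℝ F]
      {u : (Fin n → ℝ) → (Fin p → ℝ) → F},
      ContDiff ℝ 2 (fun x : (Fin n → ℝ) × (Fin p → ℝ) => u x.1 x.2) →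
      ContDiff ℝ 2 (fun z => u z θbar) :=
    fun hu => hu.comp (contDiff_id.prodMk contDiff_const)
  exact SmoothedKKT.exists_central_path (hsection hf) (hsection hg) (hsection hh)
    hstat hfeas_g hfeas_h hcompl hstrict hLICQ hSOSC

/-- **Theorem 3, point 1 (central path: existence, convergence, O(τ) error bound).**
If `(z*, λ*, μ*)` is a KKT point at `θ̄` satisfying LICQ, SOSC and strict
complementarity, then there are `τ̄ > 0`, `C > 0` and a continuously differentiable map
`τ ↦ (z(τ), λ(τ), μ(τ))` on `(0, τ̄)` solving, for each `τ ∈ (0, τ̄)`, the smoothed KKT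
system at `θ̄` (stationarity, `g = 0`, `h < 0`, `μ > 0`, `−μᵢhᵢ = τ`), with
`(z(τ), λ(τ), μ(τ)) → (z*, λ*, μ*)` as `τ → 0⁺` and `‖z(τ) − z*‖ ≤ C τ`. -/
theorem central_path_existence_and_convergence
    {n p m q : ℕ}
    (f : (Fin n → ℝ) → (Fin p → ℝ) → ℝ)
    (g : (Fin n → ℝ) → (Fin p → ℝ) → Fin m → ℝ)
    (h : (Fin n → ℝ) → (Fin p → ℝ) → Fin q → ℝ)
    (hf : ContDiff ℝ 2 (fun x : (Fin n → ℝ) × (Fin p → ℝ) => f x.1 x.2))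
    (hg : ContDiff ℝ 2 (fun x : (Fin n → ℝ) × (Fin p → ℝ) => g x.1 x.2))
    (hh : ContDiff ℝ 2 (fun x : (Fin n → ℝ) × (Fin p → ℝ) => h x.1 x.2))
    (θbar : Fin p → ℝ) (zs : Fin n → ℝ) (lams : Fin m → ℝ) (mus : Fin q → ℝ)
    -- (z*, λ*, μ*) is a KKT point at θ̄:
    (hstat : fderiv ℝ (fun z => f z θbar) zs
        + ∑ j, lams j • fderiv ℝ (fun z => g z θbar j) zs
        + ∑ i, mus i • fderiv ℝ (fun z => h z θbar i) zs = 0)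
    (hfeas_g : g zs θbar = 0)
    (hfeas_h : ∀ i, h zs θbar i ≤ 0)
    (hmu_nonneg : ∀ i, 0 ≤ mus i)
    (hcompl : ∀ i, mus i * h zs θbar i = 0)
    -- strict complementarity:
    (hstrict : ∀ i, h zs θbar i = 0 → 0 < mus i)
    -- LICQ:
    (hLICQ : LinearIndependent ℝ (Sum.elim
        (fun j : Fin m => fderiv ℝ (fun z => g z θbar j) zs)
        (fun i : {i : Fin q // h zs θbar i = 0} =>
          fderiv ℝ (fun z => h z θbar (i : Fin q)) zs)))
    -- SOSC:
    (hSOSC : ∀ d : Fin n → ℝ, d ≠ 0 →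
        (∀ j, fderiv ℝ (fun z => g z θbar j) zs d = 0) →
        (∀ i, h zs θbar i = 0 → fderiv ℝ (fun z => h z θbar i) zs d = 0) →
        0 < fderiv ℝ (fun z => fderiv ℝ (fun w =>
              f w θbar + ∑ j, lams j * g w θbar j + ∑ i, mus i * h w θbar i) z d) zs d) :
    ∃ τbar C : ℝ, 0 < τbar ∧ 0 < C ∧
      ∃ (zc : ℝ → (Fin n → ℝ)) (lc : ℝ → (Fin m → ℝ)) (mc : ℝ → (Fin q → ℝ)),
        ContDiffOn ℝ 1 zc (Set.Ioo 0 τbar) ∧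
        ContDiffOn ℝ 1 lc (Set.Ioo 0 τbar) ∧
        ContDiffOn ℝ 1 mc (Set.Ioo 0 τbar) ∧
        (∀ τ ∈ Set.Ioo (0 : ℝ) τbar,
          (fderiv ℝ (fun z => f z θbar) (zc τ)
              + ∑ j, lc τ j • fderiv ℝ (fun z => g z θbar j) (zc τ)
              + ∑ i, mc τ i • fderiv ℝ (fun z => h z θbar i) (zc τ) = 0) ∧
          g (zc τ) θbar = 0 ∧
          (∀ i, h (zc τ) θbar i < 0) ∧
          (∀ i, 0 < mc τ i) ∧
          (∀ i, -(mc τ i * h (zc τ) θbar i) = τ)) ∧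
        Tendsto (fun τ => (zc τ, lc τ, mc τ)) (𝓝[>] (0 : ℝ)) (𝓝 (zs, lams, mus)) ∧
        (∀ τ ∈ Set.Ioo (0 : ℝ) τbar, ‖zc τ - zs‖ ≤ C * τ) :=
  central_path_existence_and_convergence_general f g h hf hg hh θbar zs lams mus hstat hfeas_g
    hfeas_h hcompl hstrict hLICQ hSOSC
end
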